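/- Let D be an integral domain with quotient field K, let S be a set of monic polynomials of degree n in D[X], and let f(X) = g(X)/d ∈ K[X] with g ∈ D[X], d ∈ D nonzero. Then f ∈ Int(M_n^S(D)) (i.e., f(M) ∈ M_n(D) for every n×n matrix M over D whose characteristic polynomial lies in S) if and only if g(X) is divisible modulo dD[X] by every p ∈ S, i.e., g ∈ (p(X)) + dD[X] for all p ∈ S. -/

import Mathlib

/-!
With `f = g / d`, the matrix `f(M)` is integral exactly when `d` divides every entry of `g(M)`.
If `g = a p + d b` with `p` the characteristic polynomial of `M`, Cayley–Hamilton gives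
`g(M) = d b(M)`. Conversely, the companion matrix `C` of a monic `p ∈ S` is the matrix of
multiplication by `X` on `D[X]/(p)` in the basis `1, X, …, X^(n-1)`; its characteristic
polynomial is `p`, and the first column of `g(C)` is the coefficient vector of `g mod p`.
So `d` divides `g mod p`, that is, `g ∈ (p) + dD[X]`.
-/

open Polynomial

section CommRing

variable {R : Type*} [CommRing R]

noncomputable def companionMatrix {p : R[X]} (hp : p.Monic) :
    Matrix (Fin p.natDegree) (Fin p.natDegree) R :=
  Algebra.leftMulMatrix (AdjoinRoot.powerBasisAux' hp) (AdjoinRoot.root p)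

theorem AdjoinRoot.minpoly_powerBasis'_gen {p : R[X]} (hp : p.Monic) :
    minpoly R (AdjoinRoot.powerBasis' hp).gen = p := by
  nontriviality R
  rw [AdjoinRoot.powerBasis'_gen]
  refine (minpoly.unique' R _ hp (by rw [AdjoinRoot.aeval_eq, AdjoinRoot.mk_self])
    fun q hq => or_iff_not_imp_left.2 fun hq0 hroot => hq0 ?_).symm
  rw [AdjoinRoot.aeval_eq, AdjoinRoot.mk_eq_zero, ← modByMonic_eq_zero_iff_dvd hp] at hroot
  rwa [(modByMonic_eq_self_iff hp).2 hq] at hroot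

theorem charpoly_companionMatrix {p : R[X]} (hp : p.Monic) :
    (companionMatrix hp).charpoly = p :=
  (charpoly_leftMulMatrix (AdjoinRoot.powerBasis' hp)).trans
    (AdjoinRoot.minpoly_powerBasis'_gen hp)

theorem aeval_companionMatrix_apply_zero {p : R[X]} (hp : p.Monic) (g : R[X])
    (hpos : 0 < p.natDegree) (i : Fin p.natDegree) :
    aeval (companionMatrix hp) g i ⟨0, hpos⟩ = (g %ₘ p).coeff i := by
  have hone : AdjoinRoot.powerBasisAux' hp ⟨0, hpos⟩ = 1 :=
    ((AdjoinRoot.powerBasis' hp).basis_eq_pow ⟨0, hpos⟩).trans (pow_zero _)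
  rw [companionMatrix, aeval_algHom_apply, AdjoinRoot.aeval_eq,
    Algebra.leftMulMatrix_eq_repr_mul, hone, mul_one, AdjoinRoot.powerBasisAux'_repr_apply_to_fun,
    AdjoinRoot.modByMonicHom_mk]

theorem mem_span_pair_of_C_dvd_modByMonic {p g : R[X]} {d : R} (h : C d ∣ g %ₘ p) :
    g ∈ Ideal.span {p, C d} := by
  obtain ⟨r, hr⟩ := h
  exact Ideal.mem_span_pair.2 ⟨g /ₘ p, r, by
    rw [mul_comm _ p, mul_comm r, ← hr, add_comm, modByMonic_add_div]⟩

theorem mem_span_pair_of_dvd_aeval_companionMatrix {p g : R[X]} {d : R} (hp : p.Monic)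
    (h : ∀ i j, d ∣ aeval (companionMatrix hp) g i j) : g ∈ Ideal.span {p, C d} := by
  nontriviality R
  rcases Nat.eq_zero_or_pos p.natDegree with h0 | hpos
  · rw [hp.natDegree_eq_zero.1 h0, Ideal.span_insert, Ideal.span_singleton_one, top_sup_eq]
    exact Submodule.mem_top
  refine mem_span_pair_of_C_dvd_modByMonic ((C_dvd_iff_dvd_coeff _ _).2 fun k => ?_)
  by_cases hk : k < p.natDegree
  · simpa [aeval_companionMatrix_apply_zero hp g hpos] using h ⟨k, hk⟩ ⟨0, hpos⟩
  · rw [coeff_eq_zero_of_degree_lt]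
    · exact dvd_zero d
    · refine (degree_modByMonic_lt g hp).trans_le ?_
      rw [degree_eq_natDegree hp.ne_zero]
      exact_mod_cast not_lt.1 hk

theorem Matrix.dvd_aeval_apply_of_mem_span_charpoly {m : Type*} [Fintype m] [DecidableEq m]
    (M : Matrix m m R) {g : R[X]} {d : R} (h : g ∈ Ideal.span {M.charpoly, C d}) (i j : m) :
    d ∣ aeval M g i j := by
  obtain ⟨a, b, rfl⟩ := Ideal.mem_span_pair.1 h
  have : aeval M (a * M.charpoly + b * C d) = d • aeval M b := by
    rw [map_add, map_mul, map_mul, Matrix.aeval_self_charpoly, mul_zero, zero_add, aeval_C,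
      ← Algebra.commutes, ← Algebra.smul_def]
  rw [this, Matrix.smul_apply, smul_eq_mul]
  exact dvd_mul_right d _

end CommRing

section FractionRing

variable {D K : Type*} [CommRing D] [Field K] [Algebra D K]

theorem aeval_map_C_inv_mul_map_apply {m : Type*} [Fintype m] [DecidableEq m]
    (M : Matrix m m D) (g : D[X]) (d : D) (i j : m) :
    aeval (M.map (algebraMap D K)) (C (algebraMap D K d)⁻¹ * g.map (algebraMap D K)) i j
      = (algebraMap D K d)⁻¹ * algebraMap D K (aeval M g i j) := by
  have : aeval (M.map (algebraMap D K)) g = (aeval M g).map (algebraMap D K) :=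
    aeval_algHom_apply ((Algebra.ofId D K).mapMatrix) M g
  rw [map_mul, aeval_C, aeval_map_algebraMap, this, ← Algebra.smul_def, Matrix.smul_apply,
    Matrix.map_apply, smul_eq_mul]

theorem inv_mul_algebraMap_mem_range_iff_dvd [FaithfulSMul D K] {d : D} (hd : d ≠ 0) (x : D) :
    (algebraMap D K d)⁻¹ * algebraMap D K x ∈ (algebraMap D K).range ↔ d ∣ x := by
  have hinj := FaithfulSMul.algebraMap_injective D K
  have hd' : algebraMap D K d ≠ 0 := (map_ne_zero_iff _ hinj).2 hd
  refine ⟨fun ⟨e, he⟩ => ⟨e, hinj ?_⟩, fun ⟨e, he⟩ => ⟨e, ?_⟩⟩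
  · rw [map_mul, he, mul_inv_cancel_left₀ hd']
  · rw [he, map_mul, inv_mul_cancel_left₀ hd']

end FractionRing

theorem stmt_6_general (D : Type*) [CommRing D] (K : Type*) [Field K]
    [Algebra D K] [IsFractionRing D K] (n : ℕ) (S : Set (Polynomial D))
    (hS : ∀ p ∈ S, p.Monic ∧ p.natDegree = n)
    (g : Polynomial D) (d : D) (hd : d ≠ 0) :
    (∀ M : Matrix (Fin n) (Fin n) D, M.charpoly ∈ S → ∀ i j : Fin n,
        (Polynomial.aeval (M.map (algebraMap D K))
          (Polynomial.C ((algebraMap D K d)⁻¹) * g.map (algebraMap D K))) i j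
          ∈ (algebraMap D K).range) ↔
      ∀ p ∈ S, g ∈ Ideal.span ({p, Polynomial.C d} : Set (Polynomial D)) := by
  simp only [aeval_map_C_inv_mul_map_apply, inv_mul_algebraMap_mem_range_iff_dvd hd]
  constructor
  · intro H p hp
    obtain ⟨hpm, rfl⟩ := hS p hp
    exact mem_span_pair_of_dvd_aeval_companionMatrix hpm
      (H _ ((charpoly_companionMatrix hpm).symm ▸ hp))
  · exact fun H M hM => M.dvd_aeval_apply_of_mem_span_charpoly (H _ hM)

/-- Let `D` be an integral domain with quotient field `K`, let `S` be a set
of monic polynomials of degree `n` in `D[X]`, and let `f = g/d ∈ K[X]` with `g ∈ D[X]` and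
`d ∈ D` nonzero.  Then `f ∈ Int(M_n^S(D))`, i.e. `f(M)` has all entries in `D` for every
`n × n` matrix `M` over `D` whose characteristic polynomial lies in `S`, if and only if
`g` is divisible modulo `dD[X]` by every `p ∈ S`, i.e. `g ∈ (p) + dD[X]` for all `p ∈ S`. -/
theorem stmt_6 (D : Type*) [CommRing D] [IsDomain D] (K : Type*) [Field K]
    [Algebra D K] [IsFractionRing D K] (n : ℕ) (S : Set (Polynomial D))
    (hS : ∀ p ∈ S, p.Monic ∧ p.natDegree = n)
    (g : Polynomial D) (d : D) (hd : d ≠ 0) :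
    (∀ M : Matrix (Fin n) (Fin n) D, M.charpoly ∈ S → ∀ i j : Fin n,
        (Polynomial.aeval (M.map (algebraMap D K))
          (Polynomial.C ((algebraMap D K d)⁻¹) * g.map (algebraMap D K))) i j
          ∈ (algebraMap D K).range) ↔
      ∀ p ∈ S, g ∈ Ideal.span ({p, Polynomial.C d} : Set (Polynomial D)) :=
  stmt_6_general D K n S hS g d hd
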